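/- For the m-chained form on ℝ^{km+1} (m ≥ 2), the derived flag satisfies G^i = span{ ∂/∂z^{k-i}, …, ∂/∂z^k, g₀ } for 0 ≤ i ≤ k−1, where ∂/∂z^j denotes the m fields ∂/∂z^j_1, …, ∂/∂z^j_m; in particular rank G^i = (i+1)m + 1 and G^{k-1} = T ℝ^{km+1}. -/

import Mathlib

/-- Lie bracket of vector fields on `ι → ℝ`: `[X, Y] = DY·X − DX·Y`. -/
noncomputable def bracket {ι : Type} [Fintype ι] [DecidableEq ι]
    (X Y : (ι → ℝ) → (ι → ℝ)) : (ι → ℝ) → (ι → ℝ) :=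
  fun x => fderiv ℝ Y x (X x) - fderiv ℝ X x (Y x)

/-- The C∞(X)-module of vector fields generated by a set `S` of vector fields. -/
inductive SmoothSpan {ι : Type} [Fintype ι] [DecidableEq ι]
    (S : Set ((ι → ℝ) → (ι → ℝ))) : ((ι → ℝ) → (ι → ℝ)) → Prop
  | of {f : (ι → ℝ) → (ι → ℝ)} (hf : f ∈ S) : SmoothSpan S f
  | zero : SmoothSpan S (fun _ _ => 0)
  | add {f g : (ι → ℝ) → (ι → ℝ)} : SmoothSpan S f → SmoothSpan S g →
      SmoothSpan S (fun x => f x + g x)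
  | smul (h : (ι → ℝ) → ℝ) (hh : ContDiff ℝ (⊤ : ℕ∞) h) {f : (ι → ℝ) → (ι → ℝ)} :
      SmoothSpan S f → SmoothSpan S (fun x i => h x * f x i)

/-- The span, over smooth functions, of a set of vector fields. -/
noncomputable def smoothSpan {ι : Type} [Fintype ι] [DecidableEq ι]
    (S : Set ((ι → ℝ) → (ι → ℝ))) : Set ((ι → ℝ) → (ι → ℝ)) :=
  {f | SmoothSpan S f}

/-- The derived flag: `G⁰ = span S`, `G^{i+1} = G^i + [G^i, G^i]`. -/
noncomputable def derivedFlag {ι : Type} [Fintype ι] [DecidableEq ι]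
    (S : Set ((ι → ℝ) → (ι → ℝ))) : ℕ → Set ((ι → ℝ) → (ι → ℝ))
  | 0 => smoothSpan S
  | i+1 => smoothSpan (derivedFlag S i ∪
      {h | ∃ X ∈ derivedFlag S i, ∃ Y ∈ derivedFlag S i, h = bracket X Y})

/-- The pointwise evaluation of a distribution: the subspace of `ι → ℝ` spanned
by the values at `x` of the vector fields in `D`. -/
noncomputable def ptSpan {ι : Type} [Fintype ι] [DecidableEq ι]
    (D : Set ((ι → ℝ) → (ι → ℝ))) (x : ι → ℝ) : Submodule ℝ (ι → ℝ) :=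
  Submodule.span ℝ {v | ∃ f ∈ D, f x = v}

/-- The characteristic distribution `C = {c ∈ D : [c, D] ⊆ D}`. -/
noncomputable def charDist {ι : Type} [Fintype ι] [DecidableEq ι]
    (D : Set ((ι → ℝ) → (ι → ℝ))) : Set ((ι → ℝ) → (ι → ℝ)) :=
  {c | c ∈ D ∧ ∀ f ∈ D, bracket c f ∈ D}

/-- `g₀ = ∂/∂z₀ + Σ_{i=1}^{k-1} z_{i+1} ∂/∂z_i` on `ℝ^{k+1}`. -/
noncomputable def g0 (k : ℕ) : (Fin (k+1) → ℝ) → (Fin (k+1) → ℝ) :=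
  fun x i => if i.val = 0 then 1 else if h : i.val < k then x ⟨i.val + 1, by omega⟩ else 0

/-- `g₁ = ∂/∂z_k` on `ℝ^{k+1}`. -/
noncomputable def g1 (k : ℕ) : (Fin (k+1) → ℝ) → (Fin (k+1) → ℝ) :=
  fun _ i => if i.val = k then 1 else 0

/-- The coordinate vector field `∂/∂z_j` on `ℝ^{k+1}`. -/
noncomputable def eN (k j : ℕ) : (Fin (k+1) → ℝ) → (Fin (k+1) → ℝ) :=
  fun _ i => if i.val = j then 1 else 0

/-- Coordinate index set for `ℝ^{km+1}`: `none` is `z₀`, `some (j, i)` is `z^{j+1}_{i+1}`. -/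
abbrev MIdx (k m : ℕ) := Option (Fin k × Fin m)

/-- `g₀ = ∂/∂z₀ + Σ_{j=1}^{m} Σ_{i=1}^{k-1} z^{i+1}_j ∂/∂z^i_j` on `ℝ^{km+1}`. -/
noncomputable def g0m (k m : ℕ) : (MIdx k m → ℝ) → (MIdx k m → ℝ) :=
  fun x i =>
    match i with
    | none => 1
    | some (j, l) => if h : j.val + 1 < k then x (some (⟨j.val + 1, h⟩, l)) else 0

/-- `g_l = ∂/∂z^k_l` on `ℝ^{km+1}`. -/
noncomputable def gm (k m : ℕ) (l : Fin m) : (MIdx k m → ℝ) → (MIdx k m → ℝ) :=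
  fun _ i =>
    match i with
    | none => 0
    | some (j, r) => if j.val = k - 1 ∧ r = l then 1 else 0

/-- The coordinate vector field `∂/∂z^{j+1}_{l+1}` on `ℝ^{km+1}`. -/
noncomputable def eM (k m : ℕ) (j : Fin k) (l : Fin m) : (MIdx k m → ℝ) → (MIdx k m → ℝ) :=
  fun _ i => if i = some (j, l) then 1 else 0

/-- The set of controlled vector fields `{g₀, g₁, …, g_m}` of the `m`-chained form. -/
noncomputable def GsetM (k m : ℕ) : Set ((MIdx k m → ℝ) → (MIdx k m → ℝ)) :=
  {g0m k m} ∪ {f | ∃ l : Fin m, f = gm k m l}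

section Aux
variable {ι : Type} [Fintype ι] [DecidableEq ι]

lemma smoothSpan_mem_congr {S : Set ((ι → ℝ) → (ι → ℝ))} {f g : (ι → ℝ) → (ι → ℝ)}
    (hf : f ∈ smoothSpan S) (h : f = g) : g ∈ smoothSpan S := h ▸ hf

lemma subset_smoothSpan (S : Set ((ι → ℝ) → (ι → ℝ))) : S ⊆ smoothSpan S :=
  fun _ hf => SmoothSpan.of hf

lemma smoothSpan_le {S T : Set ((ι → ℝ) → (ι → ℝ))} (h : S ⊆ smoothSpan T) :
    smoothSpan S ⊆ smoothSpan T := by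
  intro f hf
  induction hf with
  | of hf => exact h hf
  | zero => exact SmoothSpan.zero
  | add _ _ ih1 ih2 => exact SmoothSpan.add ih1 ih2
  | smul h hh _ ih => exact SmoothSpan.smul h hh ih

lemma smoothSpan_mono {S T : Set ((ι → ℝ) → (ι → ℝ))} (h : S ⊆ T) :
    smoothSpan S ⊆ smoothSpan T :=
  smoothSpan_le (fun f hf => SmoothSpan.of (h hf))

lemma smoothSpan_smooth {S : Set ((ι → ℝ) → (ι → ℝ))}
    (hS : ∀ f ∈ S, ContDiff ℝ (⊤ : ℕ∞) f) {f : (ι → ℝ) → (ι → ℝ)} (hf : f ∈ smoothSpan S) :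
    ContDiff ℝ (⊤ : ℕ∞) f := by
  induction hf with
  | of hf => exact hS _ hf
  | zero => exact contDiff_const
  | add _ _ ih1 ih2 => exact ih1.add ih2
  | smul h hh _ ih =>
      exact contDiff_pi.2 fun i => hh.mul ((contDiff_pi.1 ih) i)

lemma smoothSpan_smul' {S : Set ((ι → ℝ) → (ι → ℝ))} (h : (ι → ℝ) → ℝ)
    (hh : ContDiff ℝ (⊤ : ℕ∞) h) {f : (ι → ℝ) → (ι → ℝ)} (hf : f ∈ smoothSpan S) :
    (fun x => h x • f x) ∈ smoothSpan S :=
  smoothSpan_mem_congr (SmoothSpan.smul h hh hf) (by funext x i; simp [Pi.smul_apply, smul_eq_mul])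

lemma smoothSpan_neg {S : Set ((ι → ℝ) → (ι → ℝ))} {f : (ι → ℝ) → (ι → ℝ)}
    (hf : f ∈ smoothSpan S) : (fun x => -f x) ∈ smoothSpan S := by
  have := smoothSpan_smul' (fun _ => (-1 : ℝ)) contDiff_const hf
  exact smoothSpan_mem_congr this (by funext x; simp)

end Aux
section Bracket
variable {ι : Type} [Fintype ι] [DecidableEq ι]

lemma bracket_self (X : (ι → ℝ) → (ι → ℝ)) : bracket X X = fun _ _ => 0 := by
  funext x i; simp [bracket]

lemma bracket_zero_right (X : (ι → ℝ) → (ι → ℝ)) :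
    bracket X (fun _ _ => (0:ℝ)) = fun _ _ => 0 := by
  funext x i
  simp only [bracket]
  have e : (fun (_ : ι → ℝ) (_ : ι) => (0:ℝ)) = (fun (_ : ι → ℝ) => (0 : ι → ℝ)) := rfl
  rw [e]
  have h1 : fderiv ℝ (fun (_ : ι → ℝ) => (0 : ι → ℝ)) x = 0 := fderiv_const_apply (0 : ι → ℝ)
  have h2 : (fun (_:ι) => (0:ℝ)) = (0 : ι → ℝ) := rfl
  rw [h1]
  simp only [h2, map_zero]
  simp

lemma bracket_zero_left (X : (ι → ℝ) → (ι → ℝ)) :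
    bracket (fun _ _ => (0:ℝ)) X = fun _ _ => 0 := by
  funext x i
  simp only [bracket]
  have e : (fun (_ : ι → ℝ) (_ : ι) => (0:ℝ)) = (fun (_ : ι → ℝ) => (0 : ι → ℝ)) := rfl
  rw [e]
  have h1 : fderiv ℝ (fun (_ : ι → ℝ) => (0 : ι → ℝ)) x = 0 := fderiv_const_apply (0 : ι → ℝ)
  have h2 : (fun (_:ι) => (0:ℝ)) = (0 : ι → ℝ) := rfl
  rw [h1]
  simp only [h2, map_zero]
  simp

lemma bracket_add_right {X Y Z : (ι → ℝ) → (ι → ℝ)}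
    (hY : ContDiff ℝ (⊤ : ℕ∞) Y) (hZ : ContDiff ℝ (⊤ : ℕ∞) Z) :
    bracket X (fun x => Y x + Z x) = fun x => bracket X Y x + bracket X Z x := by
  funext x
  simp only [bracket]
  rw [fderiv_fun_add (hY.differentiable (by simp) x) (hZ.differentiable (by simp) x)]
  simp only [ContinuousLinearMap.add_apply, map_add]
  abel

lemma bracket_add_left {X Y Z : (ι → ℝ) → (ι → ℝ)}
    (hY : ContDiff ℝ (⊤ : ℕ∞) Y) (hZ : ContDiff ℝ (⊤ : ℕ∞) Z) :
    bracket (fun x => Y x + Z x) X = fun x => bracket Y X x + bracket Z X x := by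
  funext x
  simp only [bracket]
  rw [fderiv_fun_add (hY.differentiable (by simp) x) (hZ.differentiable (by simp) x)]
  simp only [ContinuousLinearMap.add_apply, map_add]
  abel

lemma bracket_smul_right {X Y : (ι → ℝ) → (ι → ℝ)} (h : (ι → ℝ) → ℝ)
    (hh : ContDiff ℝ (⊤ : ℕ∞) h) (hY : ContDiff ℝ (⊤ : ℕ∞) Y) :
    bracket X (fun x => h x • Y x) =
      fun x => h x • bracket X Y x + (fderiv ℝ h x (X x)) • Y x := by
  funext x
  simp only [bracket]
  rw [fderiv_fun_smul (hh.differentiable (by simp) x) (hY.differentiable (by simp) x)]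
  simp only [ContinuousLinearMap.add_apply, ContinuousLinearMap.smul_apply,
    ContinuousLinearMap.smulRight_apply, map_smul, smul_sub]
  module

lemma bracket_smul_left {X Y : (ι → ℝ) → (ι → ℝ)} (h : (ι → ℝ) → ℝ)
    (hh : ContDiff ℝ (⊤ : ℕ∞) h) (hY : ContDiff ℝ (⊤ : ℕ∞) Y) :
    bracket (fun x => h x • Y x) X =
      fun x => h x • bracket Y X x + (-(fderiv ℝ h x (X x))) • Y x := by
  funext x
  simp only [bracket]
  rw [fderiv_fun_smul (hh.differentiable (by simp) x) (hY.differentiable (by simp) x)]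
  simp only [ContinuousLinearMap.add_apply, ContinuousLinearMap.smul_apply,
    ContinuousLinearMap.smulRight_apply, map_smul, smul_sub]
  module

/-- smoothness of `x ↦ fderiv h x (X x)` -/
lemma contDiff_fderiv_apply {h : (ι → ℝ) → ℝ} {X : (ι → ℝ) → (ι → ℝ)}
    (hh : ContDiff ℝ (⊤ : ℕ∞) h) (hX : ContDiff ℝ (⊤ : ℕ∞) X) :
    ContDiff ℝ (⊤ : ℕ∞) (fun x => fderiv ℝ h x (X x)) :=
  (hh.fderiv_right (by simp)).clm_apply hX

end Bracket
section Stability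
variable {ι : Type} [Fintype ι] [DecidableEq ι]

/-- Brackets of elements of `smoothSpan S` lie in the smooth span of `S` together
with the pairwise brackets of elements of `S`. -/
lemma bracket_mem_smoothSpan {S : Set ((ι → ℝ) → (ι → ℝ))}
    (hS : ∀ f ∈ S, ContDiff ℝ (⊤ : ℕ∞) f)
    {X Y : (ι → ℝ) → (ι → ℝ)} (hX : X ∈ smoothSpan S) (hY : Y ∈ smoothSpan S) :
    bracket X Y ∈ smoothSpan (S ∪ {h | ∃ f ∈ S, ∃ g ∈ S, h = bracket f g}) := by
  set T := S ∪ {h | ∃ f ∈ S, ∃ g ∈ S, h = bracket f g} with hT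
  have hsub : smoothSpan S ⊆ smoothSpan T :=
    smoothSpan_mono (Set.subset_union_left)
  -- first: fixed left argument in S
  have key : ∀ f ∈ S, ∀ Z ∈ smoothSpan S, bracket f Z ∈ smoothSpan T := by
    intro f hf Z hZ
    induction hZ with
    | @of g hg =>
        exact SmoothSpan.of (Or.inr ⟨f, hf, g, hg, rfl⟩)
    | zero =>
        exact smoothSpan_mem_congr SmoothSpan.zero (bracket_zero_right f).symm
    | @add g₁ g₂ h1 h2 ih1 ih2 =>
        have := SmoothSpan.add ih1 ih2
        exact smoothSpan_mem_congr this
          (bracket_add_right (smoothSpan_smooth hS h1) (smoothSpan_smooth hS h2)).symm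
    | @smul h hh g hg ih =>
        have hgs : ContDiff ℝ (⊤ : ℕ∞) g := smoothSpan_smooth hS hg
        have e := bracket_smul_right (X := f) h hh hgs
        have e2 : (fun x i => h x * g x i) = (fun x => h x • g x) := by
          funext x i; simp
        have e' : bracket f (fun x i => h x * g x i) =
            fun x => h x • bracket f g x + (fderiv ℝ h x (f x)) • g x := by
          rw [e2, e]
        have t1 : (fun x => h x • bracket f g x) ∈ smoothSpan T :=
          smoothSpan_smul' h hh ih
        have t2 : (fun x => (fderiv ℝ h x (f x)) • g x) ∈ smoothSpan T :=
          smoothSpan_smul' _ (contDiff_fderiv_apply hh (hS f hf)) (hsub hg)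
        exact smoothSpan_mem_congr (SmoothSpan.add t1 t2) e'.symm
  -- now induct on the left argument
  induction hX with
  | of hf => exact key _ hf Y hY
  | zero => exact smoothSpan_mem_congr SmoothSpan.zero (bracket_zero_left Y).symm
  | @add f₁ f₂ h1 h2 ih1 ih2 =>
      exact smoothSpan_mem_congr (SmoothSpan.add ih1 ih2)
        (bracket_add_left (smoothSpan_smooth hS h1) (smoothSpan_smooth hS h2)).symm
  | @smul h hh f hf ih =>
      have hfs : ContDiff ℝ (⊤ : ℕ∞) f := smoothSpan_smooth hS hf
      have e := bracket_smul_left (X := Y) h hh hfs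
      have e2 : (fun x i => h x * f x i) = (fun x => h x • f x) := by
        funext x i; simp
      have e' : bracket (fun x i => h x * f x i) Y =
          fun x => h x • bracket f Y x + (-(fderiv ℝ h x (Y x))) • f x := by
        rw [e2, e]
      have hYs : ContDiff ℝ (⊤ : ℕ∞) Y := smoothSpan_smooth hS hY
      have t1 : (fun x => h x • bracket f Y x) ∈ smoothSpan T := smoothSpan_smul' h hh ih
      have t2 : (fun x => (-(fderiv ℝ h x (Y x))) • f x) ∈ smoothSpan T :=
        smoothSpan_smul' _ ((contDiff_fderiv_apply hh hYs).neg) (hsub hf)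
      exact smoothSpan_mem_congr (SmoothSpan.add t1 t2) e'.symm

/-- evaluation of a smooth span at a point -/
lemma ptSpan_smoothSpan (S : Set ((ι → ℝ) → (ι → ℝ))) (x : ι → ℝ) :
    ptSpan (smoothSpan S) x = Submodule.span ℝ {v | ∃ f ∈ S, f x = v} := by
  apply le_antisymm
  · rw [ptSpan, Submodule.span_le]
    rintro v ⟨f, hf, rfl⟩
    induction hf with
    | of hf => exact Submodule.subset_span ⟨_, hf, rfl⟩
    | zero => exact Submodule.zero_mem _
    | add h1 h2 ih1 ih2 => exact Submodule.add_mem _ ih1 ih2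
    | @smul h hh f hf ih =>
        have e2 : (fun x i => h x * f x i) x = h x • f x := by funext i; simp
        rw [e2]; exact Submodule.smul_mem _ _ ih
  · apply Submodule.span_mono
    rintro v ⟨f, hf, rfl⟩
    exact ⟨f, SmoothSpan.of hf, rfl⟩

end Stability
section Concrete
variable (k m : ℕ)

/-- The linear part of `g0m`. -/
noncomputable def LkmL : (MIdx k m → ℝ) →ₗ[ℝ] (MIdx k m → ℝ) where
  toFun x i :=
    match i with
    | none => 0
    | some (j, l) => if h : j.val + 1 < k then x (some (⟨j.val + 1, h⟩, l)) else 0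
  map_add' x y := by
    funext i
    match i with
    | none => simp
    | some (j, l) =>
        simp only [Pi.add_apply]
        split <;> simp
  map_smul' c x := by
    funext i
    match i with
    | none => simp
    | some (j, l) =>
        simp only [Pi.smul_apply, RingHom.id_apply, smul_eq_mul]
        split <;> simp

noncomputable def Lkm : (MIdx k m → ℝ) →L[ℝ] (MIdx k m → ℝ) :=
  LinearMap.toContinuousLinearMap (LkmL k m)

lemma g0m_eq : g0m k m = fun x => Lkm k m x + (fun i => if i = none then 1 else 0) := by
  funext x i
  match i with
  | none => simp [g0m, Lkm, LkmL, LinearMap.coe_toContinuousLinearMap']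
  | some (j, l) => simp [g0m, Lkm, LkmL, LinearMap.coe_toContinuousLinearMap']

lemma contDiff_g0m : ContDiff ℝ (⊤ : ℕ∞) (g0m k m) := by
  rw [g0m_eq]
  exact (Lkm k m).contDiff.add contDiff_const

lemma fderiv_g0m (x : MIdx k m → ℝ) : fderiv ℝ (g0m k m) x = Lkm k m := by
  rw [g0m_eq]
  rw [fderiv_add_const]
  exact (Lkm k m).fderiv

lemma contDiff_eM (j : Fin k) (l : Fin m) : ContDiff ℝ (⊤ : ℕ∞) (eM k m j l) := contDiff_const

lemma contDiff_gm (l : Fin m) : ContDiff ℝ (⊤ : ℕ∞) (gm k m l) := contDiff_const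

lemma fderiv_eM (j : Fin k) (l : Fin m) (x : MIdx k m → ℝ) :
    fderiv ℝ (eM k m j l) x = 0 := fderiv_const_apply _

/-- `gm` equals `eM` at index `k-1`. -/
lemma gm_eq_eM (hk : 1 ≤ k) (l : Fin m) :
    gm k m l = eM k m ⟨k - 1, by omega⟩ l := by
  funext x i
  match i with
  | none => simp [gm, eM]
  | some (j, r) =>
      simp only [gm, eM, Option.some.injEq, Prod.mk.injEq]
      congr 1
      apply propext
      constructor
      · rintro ⟨h1, h2⟩; exact ⟨Fin.ext h1, h2⟩
      · rintro ⟨h1, h2⟩; exact ⟨by rw [h1], h2⟩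

/-- The key bracket: `[eM j l, g0m] = eM (j-1) l` for `1 ≤ j`. -/
lemma bracket_eM_g0m (j : Fin k) (l : Fin m) (hj : 1 ≤ j.val) :
    bracket (eM k m j l) (g0m k m) = eM k m ⟨j.val - 1, by omega⟩ l := by
  funext x i
  simp only [bracket, fderiv_g0m, fderiv_eM, ContinuousLinearMap.zero_apply, sub_zero]
  have : (Lkm k m) (eM k m j l x) i =
      match i with
      | none => (0:ℝ)
      | some (j', l') => if h : j'.val + 1 < k then eM k m j l x (some (⟨j'.val + 1, h⟩, l')) else 0 := rfl
  rw [this]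
  match i with
  | none => simp [eM]
  | some (j', l') =>
      simp only [eM]
      by_cases h : j'.val + 1 < k
      · simp only [dif_pos h]
        by_cases he : j'.val = j.val - 1 ∧ l' = l
        · obtain ⟨h1, h2⟩ := he
          have : some (⟨j'.val + 1, h⟩, l') = some (j, l) := by
            subst h2
            congr 2
            exact Fin.ext (by simp only [Fin.val_mk]; omega)
          rw [if_pos this, if_pos]
          congr 2
          exact Fin.ext (by simp only [Fin.val_mk]; omega)
        · have h1 : ¬ (some (⟨j'.val + 1, h⟩, l') = some (j, l)) := by
            intro hc
            apply he
            obtain ⟨hc1, hc2⟩ := Prod.mk.injEq .. ▸ Option.some.inj hc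
            exact ⟨by have := Fin.val_eq_of_eq hc1; simp only [Fin.val_mk] at this; omega, hc2⟩
          have h2 : ¬ (some (j', l') = some ((⟨j.val - 1, by omega⟩ : Fin k), l)) := by
            intro hc
            apply he
            obtain ⟨hc1, hc2⟩ := Prod.mk.injEq .. ▸ Option.some.inj hc
            exact ⟨by have := Fin.val_eq_of_eq hc1; simpa using this, hc2⟩
          rw [if_neg h1, if_neg h2]
      · have hj' : j'.val = k - 1 := by omega
        simp only [dif_neg h]
        have h2 : ¬ (some (j', l') = some ((⟨j.val - 1, by omega⟩ : Fin k), l)) := by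
          intro hc
          obtain ⟨hc1, hc2⟩ := Prod.mk.injEq .. ▸ Option.some.inj hc
          have := Fin.val_eq_of_eq hc1
          simp only [Fin.val_mk] at this
          have hjk := j.isLt
          omega
        rw [if_neg h2]

end Concrete
section Flag
variable {ι : Type} [Fintype ι] [DecidableEq ι]

lemma bracket_antisymm (X Y : (ι → ℝ) → (ι → ℝ)) :
    bracket X Y = fun x => -(bracket Y X x) := by
  funext x; simp [bracket]

lemma bracket_eM_eM (k m : ℕ) (j j' : Fin k) (l l' : Fin m) :
    bracket (eM k m j l) (eM k m j' l') = fun _ _ => 0 := by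
  funext x i
  simp [bracket, fderiv_eM]

/-- The target set of the derived flag at step `i`. -/
def Tset (k m i : ℕ) : Set ((MIdx k m → ℝ) → (MIdx k m → ℝ)) :=
  {g0m k m} ∪ {f | ∃ j : Fin k, ∃ l : Fin m, k - 1 - i ≤ j.val ∧ f = eM k m j l}

lemma Tset_smooth (k m i : ℕ) : ∀ f ∈ Tset k m i, ContDiff ℝ (⊤ : ℕ∞) f := by
  rintro f (rfl | ⟨j, l, _, rfl⟩)
  · exact contDiff_g0m k m
  · exact contDiff_eM k m j l

lemma Tset_mono (k m : ℕ) {i i' : ℕ} (h : i ≤ i') : Tset k m i ⊆ Tset k m i' := by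
  rintro f (rfl | ⟨j, l, hj, rfl⟩)
  · exact Or.inl rfl
  · exact Or.inr ⟨j, l, by omega, rfl⟩

lemma flag_eq (k m : ℕ) (hk : 2 ≤ k) :
    ∀ i, i ≤ k - 1 → derivedFlag (GsetM k m) i = smoothSpan (Tset k m i) := by
  intro i
  induction i with
  | zero =>
      intro _
      have : GsetM k m = Tset k m 0 := by
        ext f
        constructor
        · rintro (rfl | ⟨l, rfl⟩)
          · exact Or.inl rfl
          · exact Or.inr ⟨⟨k - 1, by omega⟩, l, by simp, (gm_eq_eM k m (by omega) l)⟩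
        · rintro (rfl | ⟨j, l, hj, rfl⟩)
          · exact Or.inl rfl
          · refine Or.inr ⟨l, ?_⟩
            have hj' : j = ⟨k - 1, by omega⟩ := Fin.ext (by have := j.isLt; simp only [Fin.val_mk]; omega)
            rw [hj', gm_eq_eM k m (by omega) l]
      show smoothSpan (GsetM k m) = _
      rw [this]
  | succ i ih =>
      intro hi
      have hii : i ≤ k - 1 := by omega
      have hik : i ≤ k - 2 := by omega
      have ihe := ih hii
      show smoothSpan _ = _
      apply Set.Subset.antisymm
      · apply smoothSpan_le
        rintro f (hf | ⟨X, hX, Y, hY, rfl⟩)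
        · rw [ihe] at hf
          exact smoothSpan_mono (Tset_mono k m (by omega)) hf
        · rw [ihe] at hX hY
          have hb := bracket_mem_smoothSpan (Tset_smooth k m i) hX hY
          refine smoothSpan_le ?_ hb
          rintro f (hf | ⟨f₁, hf₁, f₂, hf₂, rfl⟩)
          · exact SmoothSpan.of (Tset_mono k m (by omega) hf)
          · -- brackets of generators
            rcases hf₁ with rfl | ⟨j, l, hj, rfl⟩
            · rcases hf₂ with rfl | ⟨j', l', hj', rfl⟩
              · exact smoothSpan_mem_congr SmoothSpan.zero (bracket_self _).symm
              · -- [g0m, eM] = -[eM, g0m]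
                have h1 : (1 : ℕ) ≤ j'.val := by omega
                rw [bracket_antisymm, bracket_eM_g0m k m j' l' h1]
                exact smoothSpan_neg (SmoothSpan.of
                  (Or.inr ⟨⟨j'.val - 1, by omega⟩, l', by simp only [Fin.val_mk]; omega, rfl⟩))
            · rcases hf₂ with rfl | ⟨j', l', hj', rfl⟩
              · have h1 : (1 : ℕ) ≤ j.val := by omega
                rw [bracket_eM_g0m k m j l h1]
                exact SmoothSpan.of
                  (Or.inr ⟨⟨j.val - 1, by omega⟩, l, by simp only [Fin.val_mk]; omega, rfl⟩)
              · exact smoothSpan_mem_congr SmoothSpan.zero (bracket_eM_eM k m j j' l l').symm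
      · apply smoothSpan_le
        rintro f (rfl | ⟨j, l, hj, rfl⟩)
        · exact SmoothSpan.of (Or.inl (ihe ▸ SmoothSpan.of (Or.inl rfl)))
        · by_cases hcase : k - 1 - i ≤ j.val
          · exact SmoothSpan.of (Or.inl (ihe ▸ SmoothSpan.of (Or.inr ⟨j, l, hcase, rfl⟩)))
          · have hjv : j.val = k - 2 - i := by omega
            have hjlt : j.val + 1 < k := by omega
            have hmem : eM k m ⟨j.val + 1, hjlt⟩ l ∈ derivedFlag (GsetM k m) i := by
              rw [ihe]
              exact SmoothSpan.of (Or.inr ⟨⟨j.val + 1, hjlt⟩, l, by simp only [Fin.val_mk]; omega, rfl⟩)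
            have hg0 : g0m k m ∈ derivedFlag (GsetM k m) i := by
              rw [ihe]; exact SmoothSpan.of (Or.inl rfl)
            refine SmoothSpan.of (Or.inr ⟨_, hmem, _, hg0, ?_⟩)
            rw [bracket_eM_g0m k m ⟨j.val + 1, hjlt⟩ l (by simp only [Fin.val_mk]; omega)]
            have he : (⟨j.val + 1 - 1, by omega⟩ : Fin k) = j :=
              Fin.ext (by simp only [Fin.val_mk]; omega)
            rw [he]

end Flag
section Rank

lemma rank_lemma (k m : ℕ) (hk : 2 ≤ k) (hm : 2 ≤ m) (i : ℕ) (hi : i ≤ k - 1)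
    (x : MIdx k m → ℝ) :
    Module.finrank ℝ (ptSpan (smoothSpan (Tset k m i)) x) = (i + 1) * m + 1 := by
  rw [ptSpan_smoothSpan]
  set b : Option (Fin (i+1) × Fin m) → (MIdx k m → ℝ) := fun a =>
    match a with
    | none => g0m k m x
    | some (a, l) => eM k m ⟨k - 1 - i + a.val, by have := a.isLt; omega⟩ l x with hb
  have hrange : {v | ∃ f ∈ Tset k m i, f x = v} = Set.range b := by
    ext v
    constructor
    · rintro ⟨f, (rfl | ⟨j, l, hj, rfl⟩), rfl⟩
      · exact ⟨none, rfl⟩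
      · have hje : (⟨k - 1 - i + (j.val - (k - 1 - i)), by have := j.isLt; omega⟩ : Fin k) = j :=
          Fin.ext (by simp only [Fin.val_mk]; have := j.isLt; omega)
        exact ⟨some (⟨j.val - (k - 1 - i), by have := j.isLt; omega⟩, l),
          congrArg (fun jj => eM k m jj l x) hje⟩
    · rintro ⟨a, rfl⟩
      match a with
      | none => exact ⟨g0m k m, Or.inl rfl, rfl⟩
      | some (a, l) =>
          exact ⟨eM k m ⟨k - 1 - i + a.val, by have := a.isLt; omega⟩ l, Or.inr
            ⟨_, l, by simp only [Fin.val_mk]; omega, rfl⟩, rfl⟩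
  rw [hrange]
  have bval : ∀ (p1 : Fin (i+1)) (p2 : Fin m) (r : MIdx k m),
      b (some (p1, p2)) r =
        if r = some (⟨k - 1 - i + p1.val, by have := p1.isLt; omega⟩, p2) then 1 else 0 :=
    fun _ _ _ => rfl
  have hli : LinearIndependent ℝ b := by
    rw [Fintype.linearIndependent_iff]
    intro c hc
    have h0 : c none = 0 := by
      have hnone := congrFun hc none
      rw [Finset.sum_apply] at hnone
      rw [Fintype.sum_option] at hnone
      have hb0 : ∀ p : Fin (i+1) × Fin m, (c (some p) • b (some p)) none = 0 := by
        rintro ⟨p1, p2⟩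
        rw [Pi.smul_apply, bval p1 p2 none, if_neg (by simp), smul_zero]
      rw [Finset.sum_congr rfl (fun p _ => hb0 p)] at hnone
      simp only [Pi.smul_apply, smul_eq_mul, Finset.sum_const_zero, add_zero, Pi.zero_apply] at hnone
      have : (b none) none = 1 := rfl
      rw [this, mul_one] at hnone
      exact hnone
    intro a
    match a with
    | none => exact h0
    | some (a, l) =>
        set r : MIdx k m := some (⟨k - 1 - i + a.val, by have := a.isLt; omega⟩, l) with hr
        have hrc := congrFun hc r
        rw [Finset.sum_apply] at hrc
        rw [Fintype.sum_option] at hrc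
        have hbp : ∀ p : Fin (i+1) × Fin m,
            (c (some p) • b (some p)) r = if p = (a, l) then c (some p) else 0 := by
          rintro ⟨p1, p2⟩
          rw [Pi.smul_apply, bval p1 p2 r]
          by_cases hp : (p1, p2) = (a, l)
          · have h1 : p1 = a := (Prod.mk.injEq .. ▸ hp).1
            have h2 : p2 = l := (Prod.mk.injEq .. ▸ hp).2
            subst h1; subst h2
            rw [if_pos rfl, if_pos rfl, smul_eq_mul, mul_one]
          · rw [if_neg hp, if_neg, smul_zero]
            intro hcon
            apply hp
            rw [hr] at hcon
            obtain ⟨h1, h2⟩ := Prod.mk.injEq .. ▸ Option.some.inj hcon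
            have h1' := Fin.val_eq_of_eq h1
            simp only [Fin.val_mk] at h1'
            exact Prod.mk.injEq .. ▸ ⟨Fin.ext (by omega), h2.symm⟩
        rw [Finset.sum_congr rfl (fun p _ => hbp p)] at hrc
        rw [Finset.sum_ite_eq' Finset.univ (a, l) (fun p => c (some p))] at hrc
        simp only [Finset.mem_univ, if_true, Pi.smul_apply, smul_eq_mul, Pi.zero_apply, h0,
          zero_mul, zero_add] at hrc
        exact hrc
  rw [finrank_span_eq_card hli]
  simp [Fintype.card_option, Fintype.card_prod, Nat.add_comm]

end Rank
/-- For the `m`-chained form on `ℝ^{km+1}` (`m ≥ 2`), the derived flag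
satisfies `G^i = span{∂/∂z^{k-i}, …, ∂/∂z^k, g₀}` for `0 ≤ i ≤ k−1`; in particular
`rank G^i = (i+1)m + 1` and `G^{k-1} = Tℝ^{km+1}`. -/
theorem m_chained_derived_flag (k m : ℕ) (hk : 2 ≤ k) (hm : 2 ≤ m)
    (i : ℕ) (hi : i ≤ k - 1) :
    derivedFlag (GsetM k m) i =
      smoothSpan ({g0m k m} ∪
        {f | ∃ j : Fin k, ∃ l : Fin m, k - 1 - i ≤ j.val ∧ f = eM k m j l}) ∧
    (∀ x : MIdx k m → ℝ,
      Module.finrank ℝ (ptSpan (derivedFlag (GsetM k m) i) x) = (i + 1) * m + 1) ∧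
    (i = k - 1 → ∀ x : MIdx k m → ℝ, ptSpan (derivedFlag (GsetM k m) i) x = ⊤) := by
  have hflag := flag_eq k m hk i hi
  refine ⟨hflag, fun x => ?_, fun hik x => ?_⟩
  · rw [hflag]
    exact rank_lemma k m hk hm i hi x
  · have hr : Module.finrank ℝ (ptSpan (derivedFlag (GsetM k m) i) x) = (i + 1) * m + 1 := by
      rw [hflag]; exact rank_lemma k m hk hm i hi x
    apply Submodule.eq_top_of_finrank_eq
    rw [hr, Module.finrank_fintype_fun_eq_card]
    subst hik
    have h1 : k - 1 + 1 = k := by omega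
    rw [h1]
    simp only [Fintype.card_option, Fintype.card_prod, Fintype.card_fin]
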